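/- Fix n ≥ 2, α ∈ (0,n), and m > 0. For all Lebesgue measurable sets E, F ⊂ ℝⁿ with |E| ≤ |F| = m, one has |V(E) − V(F)| ≤ (2 n ω_n^{α/n} / (n−α)) · m^{(n−α)/n} · |E △ F|, where E △ F denotes the symmetric difference of E and F. -/

import Mathlib

/-!
For `x` fixed, the kernel `y ↦ |x - y|^{-α}` is radially decreasing, so among all sets of measure
at most `m` the potential `v_A(x)` is largest for the ball of measure `m` centred at `x`; in polar
coordinates that ball gives `v = c := n ω_n^{α/n} m^{(n-α)/n} / (n-α)`. Splitting
`V(E) = ∫_E ∫_{E ∩ F} + ∫_E ∫_{E \ F}` and using the symmetry of the kernel, each of the two terms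
not already contained in `V(F)` is at most `c |E \ F|`, so `V(E) ≤ V(F) + 2c|E \ F|`; exchanging the
roles of `E` and `F` gives the bound.
-/

open MeasureTheory Metric Set Bornology

/-- The Riesz energy `V(E) = ∫_E ∫_E |x-y|^{-α} dx dy` of a set `E ⊆ ℝⁿ`. -/
noncomputable def rieszEnergy {n : ℕ} (α : ℝ) (E : Set (EuclideanSpace ℝ (Fin n))) : ℝ :=
  ∫ x in E, ∫ y in E, ‖x - y‖ ^ (-α)

/-- `ω_k`: the Lebesgue measure of the unit ball in `ℝ^k`. -/
noncomputable def unitBallVol (k : ℕ) : ℝ :=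
  (volume (ball (0 : EuclideanSpace ℝ (Fin k)) 1)).toReal

open Module Function
open scoped ENNReal

theorem ENNReal.abs_toReal_sub_toReal_le {a b d : ℝ≥0∞} (hd : d ≠ ∞) (hab : a ≤ b + d)
    (hba : b ≤ a + d) : |a.toReal - b.toReal| ≤ d.toReal := by
  by_cases ha : a = ∞
  · have hb : b = ∞ := by simpa [ha, hd] using hab
    simp [ha, hb]
  have hb : b ≠ ∞ := ne_top_of_le_ne_top (by finiteness) hba
  rw [abs_sub_le_iff, sub_le_iff_le_add', sub_le_iff_le_add', ← ENNReal.toReal_add hb hd,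
    ← ENNReal.toReal_add ha hd]
  exact ⟨ENNReal.toReal_mono (by finiteness) hab, ENNReal.toReal_mono (by finiteness) hba⟩

section MeasureSpace

variable {X : Type*} [MeasurableSpace X] {μ : Measure X}

/-- A form of the bathtub principle. -/
theorem setLIntegral_le_setLIntegral_of_measure_le {f : X → ℝ≥0∞} {A B : Set X} (t : ℝ≥0∞)
    (hA : MeasurableSet A) (hB : MeasurableSet B) (hμB : μ B ≠ ∞) (hAB : μ A ≤ μ B)
    (h_out : ∀ y ∈ A \ B, f y ≤ t) (h_in : ∀ᵐ y ∂μ.restrict (B \ A), t ≤ f y) :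
    ∫⁻ y in A, f y ∂μ ≤ ∫⁻ y in B, f y ∂μ := by
  have h_diff : μ (A \ B) ≤ μ (B \ A) := by
    have h_fin : μ (A ∩ B) ≠ ∞ := ne_top_of_le_ne_top hμB (measure_mono inter_subset_right)
    refine (ENNReal.add_le_add_iff_left h_fin).1 ?_
    rwa [measure_inter_add_sdiff A hB, inter_comm, measure_inter_add_sdiff B hA]
  calc ∫⁻ y in A, f y ∂μ = ∫⁻ y in A ∩ B, f y ∂μ + ∫⁻ y in A \ B, f y ∂μ :=
        (lintegral_inter_add_sdiff f A hB).symm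
    _ ≤ ∫⁻ y in A ∩ B, f y ∂μ + ∫⁻ _ in A \ B, t ∂μ :=
        add_le_add le_rfl (setLIntegral_mono' (hA.diff hB) h_out)
    _ ≤ ∫⁻ y in A ∩ B, f y ∂μ + ∫⁻ _ in B \ A, t ∂μ := by
        simp only [setLIntegral_const]; gcongr
    _ ≤ ∫⁻ y in B ∩ A, f y ∂μ + ∫⁻ y in B \ A, f y ∂μ := by
        rw [inter_comm]; exact add_le_add le_rfl (lintegral_mono_ae h_in)
    _ = ∫⁻ y in B, f y ∂μ := lintegral_inter_add_sdiff f B hA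

variable [SFinite μ]

theorem lintegral_energy_le_add_of_potential_le {K : X → X → ℝ≥0∞} (hK : Measurable (uncurry K))
    (hK_symm : ∀ x y, K x y = K y x) {A B : Set X} (hB : MeasurableSet B) {c : ℝ≥0∞}
    (h_pot : ∀ x, ∫⁻ y in A, K x y ∂μ ≤ c) :
    ∫⁻ x in A, ∫⁻ y in A, K x y ∂μ ∂μ ≤
      ∫⁻ x in B, ∫⁻ y in B, K x y ∂μ ∂μ + 2 * c * μ (A \ B) := by
  have h_pot_inter : ∀ x, ∫⁻ y in A ∩ B, K x y ∂μ ≤ c :=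
    fun x ↦ (lintegral_mono_set inter_subset_left).trans (h_pot x)
  have h_cross : ∫⁻ x in A, ∫⁻ y in A \ B, K x y ∂μ ∂μ ≤ c * μ (A \ B) :=
    calc ∫⁻ x in A, ∫⁻ y in A \ B, K x y ∂μ ∂μ = ∫⁻ y in A \ B, ∫⁻ x in A, K x y ∂μ ∂μ :=
          lintegral_lintegral_swap hK.aemeasurable
      _ = ∫⁻ y in A \ B, ∫⁻ x in A, K y x ∂μ ∂μ :=
          lintegral_congr fun y ↦ lintegral_congr fun x ↦ hK_symm x y
      _ ≤ ∫⁻ _ in A \ B, c ∂μ := lintegral_mono h_pot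
      _ = c * μ (A \ B) := setLIntegral_const _ _
  have h_core : ∫⁻ x in A, ∫⁻ y in A ∩ B, K x y ∂μ ∂μ ≤
      ∫⁻ x in B, ∫⁻ y in B, K x y ∂μ ∂μ + c * μ (A \ B) :=
    calc ∫⁻ x in A, ∫⁻ y in A ∩ B, K x y ∂μ ∂μ
        = ∫⁻ x in A ∩ B, ∫⁻ y in A ∩ B, K x y ∂μ ∂μ
          + ∫⁻ x in A \ B, ∫⁻ y in A ∩ B, K x y ∂μ ∂μ := (lintegral_inter_add_sdiff _ A hB).symm
      _ ≤ ∫⁻ x in B, ∫⁻ y in B, K x y ∂μ ∂μ + ∫⁻ _ in A \ B, c ∂μ := by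
          gcongr ?_ + ?_
          · exact (lintegral_mono fun x ↦ lintegral_mono_set inter_subset_right).trans
              (lintegral_mono_set inter_subset_right)
          · exact lintegral_mono h_pot_inter
      _ = ∫⁻ x in B, ∫⁻ y in B, K x y ∂μ ∂μ + c * μ (A \ B) := by rw [setLIntegral_const]
  calc ∫⁻ x in A, ∫⁻ y in A, K x y ∂μ ∂μ
      = ∫⁻ x in A, ∫⁻ y in A ∩ B, K x y ∂μ ∂μ + ∫⁻ x in A, ∫⁻ y in A \ B, K x y ∂μ ∂μ := by
        rw [← lintegral_add_left hK.lintegral_prod_right]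
        exact lintegral_congr fun x ↦ (lintegral_inter_add_sdiff _ A hB).symm
    _ ≤ ∫⁻ x in B, ∫⁻ y in B, K x y ∂μ ∂μ + c * μ (A \ B) + c * μ (A \ B) :=
        add_le_add h_core h_cross
    _ = ∫⁻ x in B, ∫⁻ y in B, K x y ∂μ ∂μ + 2 * c * μ (A \ B) := by ring

end MeasureSpace

theorem integral_integral_eq_toReal_lintegral_lintegral {X Y : Type*} [MeasurableSpace X]
    [MeasurableSpace Y] {μ : Measure X} {ν : Measure Y} [SFinite ν] {k : X → Y → ℝ}
    (hk : Measurable (uncurry k)) (hk_nonneg : ∀ x y, 0 ≤ k x y)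
    (h_fin : ∀ x, ∫⁻ y, ENNReal.ofReal (k x y) ∂ν ≠ ∞) :
    ∫ x, ∫ y, k x y ∂ν ∂μ = (∫⁻ x, ∫⁻ y, ENNReal.ofReal (k x y) ∂ν ∂μ).toReal := by
  have h_inner : ∀ x, ∫ y, k x y ∂ν = (∫⁻ y, ENNReal.ofReal (k x y) ∂ν).toReal := fun x ↦
    integral_eq_lintegral_of_nonneg_ae (ae_of_all _ (hk_nonneg x))
      (hk.comp measurable_prodMk_left).aestronglyMeasurable
  have h_meas : Measurable fun x ↦ ∫⁻ y, ENNReal.ofReal (k x y) ∂ν :=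
    (ENNReal.measurable_ofReal.comp hk).lintegral_prod_right'
  simp_rw [h_inner]
  rw [integral_eq_lintegral_of_nonneg_ae (ae_of_all _ fun _ ↦ ENNReal.toReal_nonneg)
    h_meas.ennreal_toReal.aestronglyMeasurable]
  simp_rw [ENNReal.ofReal_toReal (h_fin _)]

theorem pow_smul_indicator_rpow_eqOn {d : ℕ} (hd : 1 ≤ d) (α r : ℝ) :
    EqOn (fun t : ℝ ↦ t ^ (d - 1) • (Iic r).indicator (fun t ↦ t ^ (-α)) t)
      ((Iic r).indicator fun t ↦ t ^ ((d : ℝ) - 1 - α)) (Ioi 0) := by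
  intro t (ht : 0 < t)
  by_cases htr : t ≤ r
  · simp only [indicator_of_mem (show t ∈ Iic r from htr), smul_eq_mul]
    rw [← Real.rpow_natCast, Nat.cast_sub hd, Nat.cast_one, ← Real.rpow_add ht,
      sub_eq_add_neg _ α]
  · simp [indicator_of_notMem (show t ∉ Iic r from htr)]

theorem integrableOn_Ioi_pow_smul_indicator_rpow {d : ℕ} (hd : 1 ≤ d) {α : ℝ} (hα : α < d)
    (r : ℝ) :
    IntegrableOn (fun t : ℝ ↦ t ^ (d - 1) • (Iic r).indicator (fun t ↦ t ^ (-α)) t) (Ioi 0) := by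
  rw [integrableOn_congr_fun (pow_smul_indicator_rpow_eqOn hd α r) measurableSet_Ioi,
    IntegrableOn, integrable_indicator_iff measurableSet_Iic, IntegrableOn,
    Measure.restrict_restrict measurableSet_Iic, Iic_inter_Ioi]
  exact (intervalIntegral.intervalIntegrable_rpow' (by linarith)).1

theorem integral_Ioi_pow_smul_indicator_rpow {d : ℕ} (hd : 1 ≤ d) {α r : ℝ} (hα : α < d)
    (hr : 0 ≤ r) :
    ∫ t in Ioi (0 : ℝ), t ^ (d - 1) • (Iic r).indicator (fun t ↦ t ^ (-α)) t =
      r ^ ((d : ℝ) - α) / (d - α) := by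
  rw [setIntegral_congr_fun measurableSet_Ioi (pow_smul_indicator_rpow_eqOn hd α r),
    setIntegral_indicator measurableSet_Iic, Ioi_inter_Iic, ← intervalIntegral.integral_of_le hr,
    integral_rpow (by left; linarith), Real.zero_rpow (by linarith)]
  ring_nf

/-- The Riesz potential `∫_B |x - y|^{-α} dy` at the centre `x` of a ball `B` of measure `m`, in
dimension `d` where the unit ball has measure `ω`. -/
noncomputable def ballRieszPotential (d : ℕ) (ω α m : ℝ) : ℝ :=
  d * ω ^ (α / d) / (d - α) * m ^ ((d - α) / d)

section Haar

variable {E : Type*} [NormedAddCommGroup E] [NormedSpace ℝ E] [FiniteDimensional ℝ E]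
  [MeasurableSpace E] [BorelSpace E] [Nontrivial E] (μ : Measure E) [μ.IsAddHaarMeasure]

theorem lintegral_closedBall_rpow_neg_norm_sub (x : E) {α r : ℝ} (hα : α < finrank ℝ E)
    (hr : 0 ≤ r) :
    ∫⁻ y in closedBall x r, ENNReal.ofReal (‖x - y‖ ^ (-α)) ∂μ =
      ENNReal.ofReal (finrank ℝ E * μ.real (ball 0 1) * r ^ ((finrank ℝ E : ℝ) - α) /
        (finrank ℝ E - α)) := by
  set g : ℝ → ℝ := (Iic r).indicator fun t ↦ t ^ (-α) with hg
  have hd : 1 ≤ finrank ℝ E := finrank_pos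
  have h_ind : ∀ y, (closedBall x r).indicator (fun y ↦ ENNReal.ofReal (‖x - y‖ ^ (-α))) y =
      ENNReal.ofReal (g ‖y - x‖) := by
    intro y
    by_cases hy : ‖y - x‖ ≤ r
    · rw [indicator_of_mem (by rwa [mem_closedBall, dist_eq_norm]), norm_sub_rev, hg,
        indicator_of_mem (show ‖y - x‖ ∈ Iic r from hy)]
    · rw [indicator_of_notMem (by rwa [mem_closedBall, dist_eq_norm]), hg,
        indicator_of_notMem (show ‖y - x‖ ∉ Iic r from hy), ENNReal.ofReal_zero]
  have h_int : Integrable (fun z : E ↦ g ‖z‖) μ :=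
    (integrable_fun_norm_addHaar μ).2 (integrableOn_Ioi_pow_smul_indicator_rpow hd hα r)
  have h_nonneg : ∀ z : E, 0 ≤ g ‖z‖ := fun z ↦
    indicator_apply_nonneg fun _ ↦ Real.rpow_nonneg (norm_nonneg z) _
  rw [← lintegral_indicator measurableSet_closedBall, funext h_ind,
    lintegral_sub_right_eq_self (fun z ↦ ENNReal.ofReal (g ‖z‖)) x,
    ← ofReal_integral_eq_lintegral_ofReal h_int (ae_of_all _ h_nonneg),
    integral_fun_norm_addHaar, integral_Ioi_pow_smul_indicator_rpow hd hα hr]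
  simp only [nsmul_eq_mul, smul_eq_mul]
  ring_nf

theorem setLIntegral_rpow_neg_norm_sub_le (x : E) {α m : ℝ} (hα₀ : 0 ≤ α)
    (hα : α < finrank ℝ E) (hm : 0 < m) {A : Set E} (hA : MeasurableSet A)
    (hAm : μ A ≤ ENNReal.ofReal m) :
    ∫⁻ y in A, ENNReal.ofReal (‖x - y‖ ^ (-α)) ∂μ ≤
      ENNReal.ofReal (ballRieszPotential (finrank ℝ E) (μ.real (ball 0 1)) α m) := by
  set d := finrank ℝ E
  set ω := μ.real (ball 0 1)
  have hd : (0 : ℝ) < d := Nat.cast_pos.2 finrank_pos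
  have hω : 0 < ω := ENNReal.toReal_pos (measure_ball_pos μ 0 one_pos).ne' measure_ball_lt_top.ne
  set r := (m / ω) ^ (d : ℝ)⁻¹ with hr_def
  have hr : 0 < r := Real.rpow_pos_of_pos (div_pos hm hω) _
  have h_vol : μ (closedBall x r) = ENNReal.ofReal m := by
    rw [Measure.addHaar_closedBall μ x hr.le, ← ofReal_measureReal, ← ENNReal.ofReal_mul
      (by positivity), ← Real.rpow_natCast, hr_def, ← Real.rpow_mul (div_pos hm hω).le,
      inv_mul_cancel₀ hd.ne', Real.rpow_one, div_mul_cancel₀ _ hω.ne']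
  have h_val : d * ω * r ^ ((d : ℝ) - α) / (d - α) = ballRieszPotential d ω α m := by
    have h_split : ω ^ (α / d) * ω ^ (((d : ℝ) - α) / d) = ω := by
      rw [← Real.rpow_add hω, ← add_div, add_sub_cancel, div_self hd.ne', Real.rpow_one]
    rw [hr_def, ← Real.rpow_mul (div_pos hm hω).le, inv_mul_eq_div, Real.div_rpow hm.le hω.le,
      ballRieszPotential]
    nth_rw 1 [← h_split]
    field_simp
  calc ∫⁻ y in A, ENNReal.ofReal (‖x - y‖ ^ (-α)) ∂μ
      ≤ ∫⁻ y in closedBall x r, ENNReal.ofReal (‖x - y‖ ^ (-α)) ∂μ := by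
        refine setLIntegral_le_setLIntegral_of_measure_le (ENNReal.ofReal (r ^ (-α))) hA
          measurableSet_closedBall measure_closedBall_lt_top.ne (h_vol ▸ hAm) ?_ ?_
        · rintro y ⟨-, hy⟩
          rw [mem_closedBall, not_le, dist_comm, dist_eq_norm] at hy
          exact ENNReal.ofReal_le_ofReal (Real.rpow_le_rpow_of_nonpos hr hy.le (by linarith))
        · have h_ne : ∀ᵐ y ∂μ, y ≠ x := compl_mem_ae_iff.2 (measure_singleton x)
          filter_upwards [ae_restrict_of_ae h_ne, ae_restrict_mem
            (measurableSet_closedBall.diff hA)] with y hyx hy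
          have hy : ‖x - y‖ ≤ r := by rw [← dist_eq_norm, dist_comm]; exact hy.1
          exact ENNReal.ofReal_le_ofReal (Real.rpow_le_rpow_of_nonpos
            (norm_pos_iff.2 (sub_ne_zero.2 hyx.symm)) hy (by linarith))
    _ = ENNReal.ofReal (ballRieszPotential d ω α m) := by
        rw [lintegral_closedBall_rpow_neg_norm_sub μ x hα hr.le, h_val]

theorem abs_sub_rieszEnergy_le (α : ℝ) (hα₀ : 0 ≤ α) (hα : α < finrank ℝ E) {m : ℝ}
    (hm : 0 < m) {A B : Set E} (hA : MeasurableSet A) (hB : MeasurableSet B)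
    (hAm : μ A ≤ ENNReal.ofReal m) (hBm : μ B ≤ ENNReal.ofReal m) :
    |(∫ x in A, ∫ y in A, ‖x - y‖ ^ (-α) ∂μ ∂μ) - ∫ x in B, ∫ y in B, ‖x - y‖ ^ (-α) ∂μ ∂μ| ≤
      2 * ballRieszPotential (finrank ℝ E) (μ.real (ball 0 1)) α m * (μ (symmDiff A B)).toReal := by
  set c := ballRieszPotential (finrank ℝ E) (μ.real (ball 0 1)) α m
  set K : E → E → ℝ≥0∞ := fun x y ↦ ENNReal.ofReal (‖x - y‖ ^ (-α))
  have hK : Measurable (uncurry K) := by fun_prop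
  have hK_symm : ∀ x y, K x y = K y x := fun x y ↦ by simp only [K, norm_sub_rev]
  have h_pot : ∀ S, MeasurableSet S → μ S ≤ ENNReal.ofReal m →
      ∀ x, ∫⁻ y in S, K x y ∂μ ≤ ENNReal.ofReal c := fun S hS hSm x ↦
    setLIntegral_rpow_neg_norm_sub_le μ x hα₀ hα hm hS hSm
  have h_energy : ∀ S, MeasurableSet S → μ S ≤ ENNReal.ofReal m →
      ∫ x in S, ∫ y in S, ‖x - y‖ ^ (-α) ∂μ ∂μ = (∫⁻ x in S, ∫⁻ y in S, K x y ∂μ ∂μ).toReal :=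
    fun S hS hSm ↦ integral_integral_eq_toReal_lintegral_lintegral (by fun_prop)
      (fun _ _ ↦ Real.rpow_nonneg (norm_nonneg _) _)
      fun x ↦ ne_top_of_le_ne_top ENNReal.ofReal_ne_top (h_pot S hS hSm x)
  have hΔ : μ (symmDiff A B) ≠ ∞ := measure_symmDiff_ne_top
    (ne_top_of_le_ne_top ENNReal.ofReal_ne_top hAm) (ne_top_of_le_ne_top ENNReal.ofReal_ne_top hBm)
  have hA_diff : μ (A \ B) ≤ μ (symmDiff A B) :=
    measure_mono (by rw [symmDiff_def]; exact subset_union_left)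
  have hB_diff : μ (B \ A) ≤ μ (symmDiff A B) :=
    measure_mono (by rw [symmDiff_def]; exact subset_union_right)
  have hc : 0 ≤ c := by
    have : 0 < (finrank ℝ E : ℝ) - α := by linarith
    simp only [c, ballRieszPotential]; positivity
  rw [h_energy A hA hAm, h_energy B hB hBm]
  calc _ ≤ (2 * ENNReal.ofReal c * μ (symmDiff A B)).toReal := by
        refine ENNReal.abs_toReal_sub_toReal_le (by finiteness) ?_ ?_
        · grw [lintegral_energy_le_add_of_potential_le hK hK_symm hB (h_pot A hA hAm), hA_diff]
        · grw [lintegral_energy_le_add_of_potential_le hK hK_symm hA (h_pot B hB hBm), hB_diff]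
    _ = 2 * c * (μ (symmDiff A B)).toReal := by
        rw [ENNReal.toReal_mul, ENNReal.toReal_mul, ENNReal.toReal_ofNat, ENNReal.toReal_ofReal hc]

end Haar

/-- Lipschitz continuity of the Riesz energy with respect to symmetric difference:
for measurable `E, F ⊆ ℝⁿ` with `|E| ≤ |F| = m`,
`|V(E) − V(F)| ≤ (2 n ω_n^{α/n}/(n−α)) m^{(n−α)/n} |E △ F|`. -/
theorem rieszEnergy_lipschitz
    (n : ℕ) (hn : 2 ≤ n) (α : ℝ) (hα₀ : 0 < α) (hα₁ : α < n) (m : ℝ) (hm : 0 < m)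
    (E F : Set (EuclideanSpace ℝ (Fin n))) (hE : MeasurableSet E) (hF : MeasurableSet F)
    (hEF : volume E ≤ volume F) (hFm : volume F = ENNReal.ofReal m) :
    |rieszEnergy α E - rieszEnergy α F| ≤
      (2 * n * unitBallVol n ^ (α / n) / ((n : ℝ) - α)) * m ^ (((n : ℝ) - α) / n) *
        (volume (symmDiff E F)).toReal := by
  have : Nontrivial (EuclideanSpace ℝ (Fin n)) :=
    Module.nontrivial_of_finrank_pos (R := ℝ) (by rw [finrank_euclideanSpace_fin]; omega)
  have h := abs_sub_rieszEnergy_le volume α hα₀.le (by rwa [finrank_euclideanSpace_fin]) hm hE hF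
    (hFm ▸ hEF) hFm.le
  rw [finrank_euclideanSpace_fin] at h
  calc _ ≤ 2 * ballRieszPotential n (unitBallVol n) α m * (volume (symmDiff E F)).toReal := h
    _ = _ := by rw [ballRieszPotential]; ring
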